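/- arXiv:math-ph/0503001 — 5 statements merged into one kernel-verified Lean document; each statement's English description precedes it below -/
import Mathlib

section
/- For any permutation σ of {1,...,k}, extended to σ̃ on {0,1,...,k+1} by σ̃(0)=0 and σ̃(k+1)=k+1, the (k+1)×(k+1) integer matrix M(σ) defined by M_{ij} = 1 if σ̃(j-1) < i ≤ σ̃(j), M_{ij} = -1 if σ̃(j) < i ≤ σ̃(j-1), and M_{ij} = 0 otherwise, is invertible. -/
/-- The extension `σ̃` of a permutation `σ` of `{1,…,k}` to `{0,1,…,k+1}` (in fact to all of `ℕ`),
fixing `0` and every `j > k`.  Internally `σ : Equiv.Perm (Fin k)` acts on `{0,…,k-1}`,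
shifted by one. -/
def extPerm (k : ℕ) (σ : Equiv.Perm (Fin k)) (j : ℕ) : ℕ :=
  if h : 1 ≤ j ∧ j ≤ k then (σ ⟨j - 1, by omega⟩).val + 1 else j

/-- The `(k+1) × (k+1)` matrix `M(σ)` with rows/columns indexed by `{1,…,k+1}`
(realized as `Fin (k+1)` shifted by one): `M_{ij} = 1` if `σ̃(j-1) < i ≤ σ̃(j)`,
`M_{ij} = -1` if `σ̃(j) < i ≤ σ̃(j-1)`, and `M_{ij} = 0` otherwise. -/
def Mmat (k : ℕ) (σ : Equiv.Perm (Fin k)) : Matrix (Fin (k + 1)) (Fin (k + 1)) ℤ :=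
  fun i j =>
    if extPerm k σ j.val < i.val + 1 ∧ i.val + 1 ≤ extPerm k σ (j.val + 1) then 1
    else if extPerm k σ (j.val + 1) < i.val + 1 ∧ i.val + 1 ≤ extPerm k σ j.val then -1
    else 0

def tau (k : ℕ) (σ : Equiv.Perm (Fin k)) : Equiv.Perm (Fin (k + 1)) where
  toFun i := if h : i.val < k then ⟨(σ ⟨i.val, h⟩).val, by omega⟩ else i
  invFun i := if h : i.val < k then ⟨(σ⁻¹ ⟨i.val, h⟩).val, by omega⟩ else i
  left_inv i := by
    by_cases h : i.val < k
    · simp only [h, dif_pos]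
      have h2 : ((σ ⟨i.val, h⟩).val) < k := (σ ⟨i.val, h⟩).isLt
      simp only [h2, dif_pos]
      apply Fin.ext
      simp [Fin.eta]
    · simp [h]
  right_inv i := by
    by_cases h : i.val < k
    · simp only [h, dif_pos]
      have h2 : ((σ⁻¹ ⟨i.val, h⟩).val) < k := (σ⁻¹ ⟨i.val, h⟩).isLt
      simp only [h2, dif_pos]
      apply Fin.ext
      simp [Fin.eta]
    · simp [h]

lemma extPerm_tau (k : ℕ) (σ : Equiv.Perm (Fin k)) (j : Fin (k + 1)) :
    extPerm k σ (j.val + 1) = (tau k σ j).val + 1 := by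
  unfold extPerm tau
  by_cases h : j.val < k
  · have h1 : 1 ≤ j.val + 1 ∧ j.val + 1 ≤ k := ⟨by omega, by omega⟩
    rw [dif_pos h1]
    simp only [Equiv.coe_fn_mk, h, dif_pos]
    rfl
  · have h1 : ¬ (1 ≤ j.val + 1 ∧ j.val + 1 ≤ k) := by omega
    rw [dif_neg h1]
    simp only [Equiv.coe_fn_mk]
    rw [dif_neg h]

def Lmat (k : ℕ) : Matrix (Fin (k + 1)) (Fin (k + 1)) ℤ :=
  fun i j => if i ≤ j then 1 else 0

def Vmat (k : ℕ) : Matrix (Fin (k + 1)) (Fin (k + 1)) ℤ :=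
  fun l j => if l = j then 1 else if l.val + 1 = j.val then -1 else 0

def Nmat (k : ℕ) (σ : Equiv.Perm (Fin k)) : Matrix (Fin (k + 1)) (Fin (k + 1)) ℤ :=
  fun i j => if i.val + 1 ≤ extPerm k σ (j.val + 1) then 1 else 0

lemma N_eq (k : ℕ) (σ : Equiv.Perm (Fin k)) :
    Nmat k σ = Lmat k * Equiv.Perm.permMatrix ℤ (tau k σ)⁻¹ := by
  ext i j
  simp only [Matrix.mul_apply, Equiv.Perm.permMatrix, PEquiv.toMatrix_apply,
    Equiv.toPEquiv_apply, Option.mem_def, Option.some.injEq, Lmat, mul_ite, mul_one, mul_zero,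
    ite_and]
  have hiff : ∀ x : Fin (k + 1), ((tau k σ)⁻¹ x = j) ↔ (x = tau k σ j) := by
    intro x
    constructor
    · rintro rfl; simp
    · rintro rfl; simp
  simp only [hiff]
  rw [Finset.sum_ite_eq' Finset.univ (tau k σ j) (fun x => if i ≤ x then (1:ℤ) else 0)]
  simp only [Finset.mem_univ, if_true]
  unfold Nmat
  rw [extPerm_tau]
  simp only [Fin.le_def, Nat.add_le_add_iff_right]

lemma M_eq (k : ℕ) (σ : Equiv.Perm (Fin k)) :
    Mmat k σ = Nmat k σ * Vmat k := by
  ext i j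
  rw [Matrix.mul_apply]
  have hV : ∀ l : Fin (k+1),
      Vmat k l j = (if l = j then (1:ℤ) else 0) + (if l.val + 1 = j.val then -1 else 0) := by
    intro l
    by_cases h1 : l = j
    · subst h1; simp [Vmat]
    · simp [Vmat, h1]
  simp only [hV, mul_add, Finset.sum_add_distrib, mul_ite, mul_one, mul_zero, mul_neg]
  rw [Finset.sum_ite_eq' Finset.univ j (fun l => Nmat k σ i l)]
  simp only [Finset.mem_univ, if_true]
  rcases j with ⟨jv, hj⟩
  match jv with
  | 0 =>
    have hz : ∀ l : Fin (k+1), ¬ (l.val + 1 = 0) := fun l => by omega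
    simp only [hz, if_false, Finset.sum_const_zero, add_zero]
    have e0 : extPerm k σ 0 = 0 := by simp [extPerm]
    simp only [Mmat, Nmat, e0]
    split_ifs <;> omega
  | m + 1 =>
    have hm : m < k + 1 := by omega
    have hcond : ∀ l : Fin (k+1), (l.val + 1 = m + 1) ↔ (l = ⟨m, hm⟩) := by
      intro l
      constructor
      · intro h; exact Fin.ext (show l.val = m by omega)
      · rintro rfl; rfl
    simp only [hcond]
    rw [Finset.sum_ite_eq' Finset.univ (⟨m, hm⟩ : Fin (k+1)) (fun l => -(Nmat k σ i l))]
    simp only [Finset.mem_univ, if_true]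
    simp only [Mmat, Nmat]
    split_ifs <;> omega


/-- For any permutation `σ` of `{1,…,k}`, the matrix `M(σ)` is invertible. -/
theorem Mmat_invertible (k : ℕ) (σ : Equiv.Perm (Fin k)) : IsUnit (Mmat k σ) := by
  rw [M_eq, N_eq]
  have hL : IsUnit (Lmat k) := by
    rw [Matrix.isUnit_iff_isUnit_det]
    rw [Matrix.det_of_upperTriangular (show (Lmat k).BlockTriangular id from fun i j h => by
      simp only [Lmat]
      rw [if_neg]
      exact not_le.mpr h)]
    simp [Lmat]
  have hP : IsUnit (Equiv.Perm.permMatrix ℤ (tau k σ)⁻¹) := by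
    rw [Matrix.isUnit_iff_isUnit_det, Matrix.det_permutation]
    exact (Equiv.Perm.sign (tau k σ)⁻¹).isUnit
  have hVu : IsUnit (Vmat k) := by
    rw [Matrix.isUnit_iff_isUnit_det]
    rw [Matrix.det_of_upperTriangular (show (Vmat k).BlockTriangular id from fun i j h => by
      have h1 : i ≠ j := Ne.symm (ne_of_lt h)
      have h2 : ¬ (i.val + 1 = j.val) := by
        have h3 : j.val < i.val := h
        omega
      simp [Vmat, h1, h2])]
    simp [Vmat]
  exact (hL.mul hP).mul hVu
end

section
/- For any permutation σ of {1,...,k}, the matrix M(σ) is totally unimodular: every square submatrix of M(σ) has determinant equal to 0, 1, or -1. -/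
/-- Column interval property: each column's nonzero entries are a consecutive block
of equal entries `s ∈ {1, -1}`. -/
def ColProp {n m : ℕ} (A : Matrix (Fin n) (Fin m) ℤ) : Prop :=
  ∀ j : Fin m, ∃ a b : ℕ, ∃ s : ℤ, (s = 1 ∨ s = -1) ∧
    ∀ i : Fin n, A i j = if a ≤ (i : ℕ) ∧ (i : ℕ) < b then s else 0

lemma downclosed_mem_iff {n : ℕ} (T : Finset (Fin n))
    (hT : ∀ x y : Fin n, x ≤ y → y ∈ T → x ∈ T) (i : Fin n) :
    i ∈ T ↔ (i : ℕ) < T.card := by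
  constructor
  · intro hi
    have hsub : Finset.Iic i ⊆ T := fun x hx => hT x i (Finset.mem_Iic.mp hx) hi
    have := Finset.card_le_card hsub
    rw [Fin.card_Iic] at this
    omega
  · intro hi
    by_contra hmem
    have hsub : T ⊆ Finset.Iio i := by
      intro x hx
      rw [Finset.mem_Iio]
      by_contra hxi
      exact hmem (hT i x (le_of_not_gt hxi) hx)
    have := Finset.card_le_card hsub
    rw [Fin.card_Iio] at this
    omega

lemma strictMono_lt_iff {n n' : ℕ} (f : Fin n' → Fin n) (hf : StrictMono f) (t : ℕ) (i : Fin n') :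
    (f i : ℕ) < t ↔ (i : ℕ) < (Finset.univ.filter (fun x : Fin n' => (f x : ℕ) < t)).card := by
  rw [← downclosed_mem_iff, Finset.mem_filter]
  · simp
  · intro x y hxy hy
    rw [Finset.mem_filter] at hy ⊢
    refine ⟨Finset.mem_univ x, lt_of_le_of_lt ?_ hy.2⟩
    exact_mod_cast Fin.le_iff_val_le_val.mp (hf.monotone hxy)

lemma ColProp.submatrix {n n' m m' : ℕ} {A : Matrix (Fin n) (Fin m) ℤ} (h : ColProp A)
    (f : Fin n' → Fin n) (hf : StrictMono f) (g : Fin m' → Fin m) :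
    ColProp (A.submatrix f g) := by
  intro j
  obtain ⟨a, b, s, hs, hcol⟩ := h (g j)
  refine ⟨(Finset.univ.filter (fun x : Fin n' => (f x : ℕ) < a)).card,
    (Finset.univ.filter (fun x : Fin n' => (f x : ℕ) < b)).card, s, hs, fun i => ?_⟩
  rw [Matrix.submatrix_apply, hcol]
  refine if_congr ?_ rfl rfl
  have ha := strictMono_lt_iff f hf a i
  have hb := strictMono_lt_iff f hf b i
  have ha' : a ≤ ((f i : Fin n) : ℕ) ↔
      (Finset.univ.filter (fun x : Fin n' => (f x : ℕ) < a)).card ≤ (i : ℕ) := by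
    rw [← not_lt, ← not_lt]
    exact not_congr ha
  exact and_congr ha' hb

lemma colProp_det_mem : ∀ (n : ℕ) (A : Matrix (Fin n) (Fin n) ℤ), ColProp A →
    A.det ∈ ({-1, 0, 1} : Set ℤ) := by
  intro n
  induction n with
  | zero => intro A _; simp [Matrix.det_fin_zero]
  | succ m IH =>
    suffices h : ∀ (c : ℕ) (A : Matrix (Fin (m+1)) (Fin (m+1)) ℤ), ColProp A →
        (Finset.univ.filter fun j => A 0 j ≠ 0).card ≤ c →
        A.det ∈ ({-1, 0, 1} : Set ℤ) by
      intro A hA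
      exact h _ A hA le_rfl
    intro c
    induction c with
    | zero =>
      intro A hA hc
      have hz : ∀ j, A 0 j = 0 := by
        intro j
        by_contra hj
        have : j ∈ Finset.univ.filter fun j => A 0 j ≠ 0 := by
          simp [hj]
        have := Finset.card_pos.mpr ⟨j, this⟩
        omega
      right; left
      exact Matrix.det_eq_zero_of_row_eq_zero 0 hz
    | succ c ihc =>
      intro A hA hc
      set F := Finset.univ.filter fun j => A 0 j ≠ 0 with hF
      by_cases hcard : F.card ≤ 1
      · -- at most one nonzero in row 0
        rcases Nat.lt_or_ge F.card 1 with h0 | h1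
        · have hz : ∀ j, A 0 j = 0 := by
            intro j
            by_contra hj
            have : j ∈ F := by simp [hF, hj]
            have := Finset.card_pos.mpr ⟨j, this⟩
            omega
          right; left
          exact Matrix.det_eq_zero_of_row_eq_zero 0 hz
        · -- exactly one nonzero at j₀; expand along row 0
          have hone : F.card = 1 := le_antisymm hcard h1
          obtain ⟨j₀, hj₀⟩ := Finset.card_eq_one.mp hone
          have hmem : ∀ j, A 0 j ≠ 0 → j = j₀ := by
            intro j hj
            have : j ∈ F := by simp [hF, hj]
            rw [hj₀, Finset.mem_singleton] at this
            exact this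
          rw [Matrix.det_succ_row_zero]
          rw [Fintype.sum_eq_single j₀ (fun j hj => by
            rcases eq_or_ne (A 0 j) 0 with h | h
            · rw [h]; ring
            · exact absurd (hmem j h) hj)]
          have hminor : ColProp (A.submatrix Fin.succ j₀.succAbove) := by
            intro j
            obtain ⟨a, b, s, hs, hcol⟩ := hA (j₀.succAbove j)
            refine ⟨a - 1, b - 1, s, hs, fun i => ?_⟩
            rw [Matrix.submatrix_apply, hcol]
            refine if_congr ?_ rfl rfl
            rw [Fin.val_succ]
            omega
          have hd := IH _ hminor
          have ha0 : A 0 j₀ = 1 ∨ A 0 j₀ = -1 := by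
            have hne : A 0 j₀ ≠ 0 := by
              have : j₀ ∈ F := by rw [hj₀]; exact Finset.mem_singleton_self j₀
              rw [hF, Finset.mem_filter] at this
              exact this.2
            obtain ⟨a, b, s, hs, hcol⟩ := hA j₀
            rw [hcol 0] at hne ⊢
            split_ifs at hne ⊢ with h
            · exact hs
            · exact absurd rfl hne
          have hsign : ((-1 : ℤ) ^ (j₀ : ℕ)) = 1 ∨ ((-1 : ℤ) ^ (j₀ : ℕ)) = -1 := by
            rcases Nat.even_or_odd (j₀ : ℕ) with h | h
            · exact Or.inl h.neg_one_pow
            · exact Or.inr h.neg_one_pow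
          simp only [Set.mem_insert_iff, Set.mem_singleton_iff] at hd ⊢
          rcases hsign with h1 | h1 <;> rcases ha0 with h2 | h2 <;> rcases hd with h3 | h3 | h3 <;>
            rw [h1, h2, h3] <;> norm_num
      · -- at least two nonzeros in row 0: column operation
        push_neg at hcard
        obtain ⟨j₀, hj₀, j₁, hj₁, hne⟩ := Finset.one_lt_card.mp hcard
        rw [hF, Finset.mem_filter] at hj₀ hj₁
        obtain ⟨a₀, b₀, s₀, hs₀, hcol₀⟩ := hA j₀
        obtain ⟨a₁, b₁, s₁, hs₁, hcol₁⟩ := hA j₁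
        have h00 := hcol₀ 0
        have h01 := hcol₁ 0
        have ha₀ : a₀ = 0 ∧ 0 < b₀ := by
          by_contra hcon
          apply hj₀.2
          rw [h00, if_neg]
          simp only [Fin.val_zero]
          omega
        have ha₁ : a₁ = 0 ∧ 0 < b₁ := by
          by_contra hcon
          apply hj₁.2
          rw [h01, if_neg]
          simp only [Fin.val_zero]
          omega
        set B := A.updateCol j₁ (fun i => A i j₁ + (-(s₁ * s₀)) • A i j₀) with hB
        have hdet : B.det = A.det :=
          Matrix.det_updateCol_add_smul_self A hne.symm (-(s₁ * s₀))
        have hBcol : ∀ i j, B i j = if j = j₁ then A i j₁ - s₁ * s₀ * A i j₀ else A i j := by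
          intro i j
          rw [hB, Matrix.updateCol_apply]
          split_ifs with h
          · subst h; simp only [smul_eq_mul]; ring
          · rfl
        have hBP : ColProp B := by
          intro j
          rcases eq_or_ne j j₁ with rfl | hj
          · refine ⟨min b₀ b₁, max b₀ b₁, if b₀ ≤ b₁ then s₁ else -s₁, ?_, fun i => ?_⟩
            · rcases hs₁ with rfl | rfl <;> split_ifs <;> simp
            · rw [hBcol, if_pos rfl, hcol₀ i, hcol₁ i]
              rcases hs₀ with rfl | rfl <;> rcases hs₁ with rfl | rfl <;>
                split_ifs <;> omega
          · obtain ⟨a, b, s, hs, hcol⟩ := hA j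
            refine ⟨a, b, s, hs, fun i => ?_⟩
            rw [hBcol, if_neg hj]
            exact hcol i
        have hB0 : B 0 j₁ = 0 := by
          rw [hBcol, if_pos rfl, h00, h01, if_pos, if_pos]
          · rcases hs₀ with rfl | rfl <;> rcases hs₁ with rfl | rfl <;> ring
          · simp only [Fin.val_zero]; omega
          · simp only [Fin.val_zero]; omega
        have hsub : (Finset.univ.filter fun j => B 0 j ≠ 0) ⊆ F.erase j₁ := by
          intro j hj
          rw [Finset.mem_filter] at hj
          rcases eq_or_ne j j₁ with rfl | hjj
          · exact absurd hB0 hj.2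
          · refine Finset.mem_erase.mpr ⟨hjj, ?_⟩
            rw [hF, Finset.mem_filter]
            refine ⟨Finset.mem_univ j, ?_⟩
            rw [hBcol, if_neg hjj] at hj
            exact hj.2
        have hcount : (Finset.univ.filter fun j => B 0 j ≠ 0).card ≤ c := by
          have h1 := Finset.card_le_card hsub
          have h2 : (F.erase j₁).card = F.card - 1 :=
            Finset.card_erase_of_mem (by rw [hF, Finset.mem_filter]; exact hj₁)
          omega
        rw [← hdet]
        exact ihc B hBP hcount

lemma colProp_Mmat (k : ℕ) (σ : Equiv.Perm (Fin k)) : ColProp (Mmat k σ) := by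
  intro j
  rcases le_or_gt (extPerm k σ j.val) (extPerm k σ (j.val + 1)) with h | h
  · refine ⟨extPerm k σ j.val, extPerm k σ (j.val + 1), 1, Or.inl rfl, fun i => ?_⟩
    simp only [Mmat]
    split_ifs <;> omega
  · refine ⟨extPerm k σ (j.val + 1), extPerm k σ j.val, -1, Or.inr rfl, fun i => ?_⟩
    simp only [Mmat]
    split_ifs <;> omega

/-- `M(σ)` is totally unimodular: every square submatrix has determinant `0`, `1` or `-1`. -/
theorem Mmat_totallyUnimodular (k : ℕ) (σ : Equiv.Perm (Fin k)) :
    ∀ (m : ℕ) (f g : Fin m → Fin (k + 1)),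
      ((Mmat k σ).submatrix f g).det ∈ ({-1, 0, 1} : Set ℤ) := by
  intro m f g
  by_cases hf : Function.Injective f
  · set e := Tuple.sort f with he
    have hmono : Monotone (f ∘ e) := Tuple.monotone_sort f
    have hsm : StrictMono (f ∘ e) :=
      hmono.strictMono_of_injective (hf.comp e.injective)
    have hP := (colProp_Mmat k σ).submatrix (f ∘ e) hsm g
    have hdet := colProp_det_mem m _ hP
    have hre : (Mmat k σ).submatrix f g =
        ((Mmat k σ).submatrix (f ∘ e) g).submatrix ⇑e⁻¹ id := by
      ext i j
      simp [Matrix.submatrix_apply]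
    rw [hre, Matrix.det_permute]
    simp only [Set.mem_insert_iff, Set.mem_singleton_iff] at hdet ⊢
    rcases Int.units_eq_one_or (Equiv.Perm.sign e⁻¹) with h | h <;>
      rcases hdet with h3 | h3 | h3 <;> rw [h, h3] <;> norm_num
  · rw [Function.not_injective_iff] at hf
    obtain ⟨i, j, hij, hne⟩ := hf
    have h0 : ((Mmat k σ).submatrix f g).det = 0 := by
      rw [← Matrix.det_transpose, Matrix.transpose_submatrix]
      exact Matrix.det_zero_of_column_eq hne fun x => by simp [hij]
    rw [h0]
    right; left; rfl
end

section
/- For a permutation σ of {1,...,k}, the identity permutation is the unique permutation of degree zero: d(σ) = 0 if and only if σ = id, where d(σ) = k+1 - ℓ(σ) and ℓ(σ) is the number of ladder indices of σ. -/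
open scoped Classical

/-- The inverse extension `σ̃⁻¹`. -/
def extPermInv (k : ℕ) (σ : Equiv.Perm (Fin k)) (i : ℕ) : ℕ :=
  if h : 1 ≤ i ∧ i ≤ k then (σ⁻¹ ⟨i - 1, by omega⟩).val + 1 else i

/-- The point `(j, σ̃(j))`, `1 ≤ j ≤ k`, is a peak: `σ̃(j-1) > σ̃(j) < σ̃(j+1)`. -/
def IsPeakPt (k : ℕ) (σ : Equiv.Perm (Fin k)) (j : ℕ) : Prop :=
  1 ≤ j ∧ j ≤ k ∧ extPerm k σ j < extPerm k σ (j - 1) ∧ extPerm k σ j < extPerm k σ (j + 1)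

/-- The point `(j, σ̃(j))`, `1 ≤ j ≤ k`, is a valley: `σ̃(j-1) < σ̃(j) > σ̃(j+1)`. -/
def IsValleyPt (k : ℕ) (σ : Equiv.Perm (Fin k)) (j : ℕ) : Prop :=
  1 ≤ j ∧ j ≤ k ∧ extPerm k σ (j - 1) < extPerm k σ j ∧ extPerm k σ (j + 1) < extPerm k σ j

/-- `i` is a peak index: `(σ̃⁻¹(i), i)` is a peak. -/
def IsPeakIdx (k : ℕ) (σ : Equiv.Perm (Fin k)) (i : ℕ) : Prop :=
  IsPeakPt k σ (extPermInv k σ i)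

/-- `i` is a valley index: `(σ̃⁻¹(i), i)` is a valley; additionally `i = k+1` is a valley index. -/
def IsValleyIdx (k : ℕ) (σ : Equiv.Perm (Fin k)) (i : ℕ) : Prop :=
  i = k + 1 ∨ IsValleyPt k σ (extPermInv k σ i)

/-- `i` is a slope index: `1 ≤ i ≤ k` and `(σ̃⁻¹(i), i)` is neither a peak nor a valley. -/
def IsSlopeIdx (k : ℕ) (σ : Equiv.Perm (Fin k)) (i : ℕ) : Prop :=
  1 ≤ i ∧ i ≤ k ∧ ¬ IsPeakPt k σ (extPermInv k σ i) ∧ ¬ IsValleyPt k σ (extPermInv k σ i)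

/-- `i` is a ladder index: it is a valley or slope index and `|σ̃⁻¹(i) - σ̃⁻¹(i-1)| = 1`. -/
def IsLadderIdx (k : ℕ) (σ : Equiv.Perm (Fin k)) (i : ℕ) : Prop :=
  (IsValleyIdx k σ i ∨ IsSlopeIdx k σ i) ∧
    ((extPermInv k σ i : ℤ) - (extPermInv k σ (i - 1) : ℤ)).natAbs = 1

/-- `ℓ(σ)`: the number of ladder indices in `{1,…,k+1}`. -/
noncomputable def ladderCount (k : ℕ) (σ : Equiv.Perm (Fin k)) : ℕ :=
  ((Finset.Icc 1 (k + 1)).filter fun i => IsLadderIdx k σ i).card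

/-- The degree `d(σ) = k + 1 - ℓ(σ)`. -/
noncomputable def degree (k : ℕ) (σ : Equiv.Perm (Fin k)) : ℕ :=
  k + 1 - ladderCount k σ

lemma extPermInv_zero (k : ℕ) (σ : Equiv.Perm (Fin k)) : extPermInv k σ 0 = 0 := by
  simp [extPermInv]

lemma extPermInv_of_gt (k : ℕ) (σ : Equiv.Perm (Fin k)) (i : ℕ) (hi : k < i) :
    extPermInv k σ i = i := by
  unfold extPermInv; split <;> omega

lemma extPermInv_one (k : ℕ) (i : ℕ) : extPermInv k 1 i = i := by
  unfold extPermInv; split <;> simp <;> omega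

lemma extPerm_one (k : ℕ) (j : ℕ) : extPerm k 1 j = j := by
  unfold extPerm; split <;> simp <;> omega

/-- The identity is the unique permutation of degree zero. -/
theorem degree_eq_zero_iff_id (k : ℕ) (σ : Equiv.Perm (Fin k)) :
    degree k σ = 0 ↔ σ = 1 := by
  have hcard : (Finset.Icc 1 (k + 1)).card = k + 1 := by
    rw [Nat.card_Icc]; omega
  have hdeg : degree k σ = 0 ↔ ∀ i ∈ Finset.Icc 1 (k + 1), IsLadderIdx k σ i := by
    unfold degree ladderCount
    constructor
    · intro h
      have hle : ((Finset.Icc 1 (k + 1)).filter fun i => IsLadderIdx k σ i).card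
          ≤ (Finset.Icc 1 (k + 1)).card := Finset.card_filter_le _ _
      have heq : ((Finset.Icc 1 (k + 1)).filter fun i => IsLadderIdx k σ i)
          = Finset.Icc 1 (k + 1) := Finset.eq_of_subset_of_card_le
        (Finset.filter_subset _ _) (by omega)
      intro i hi
      have := heq ▸ hi
      exact (Finset.mem_filter.mp this).2
    · intro h
      rw [Finset.filter_true_of_mem h, hcard]; omega
  rw [hdeg]
  constructor
  · intro H
    -- the step condition
    have step : ∀ i, 1 ≤ i → i ≤ k + 1 →
        ((extPermInv k σ i : ℤ) - (extPermInv k σ (i - 1) : ℤ)).natAbs = 1 := by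
      intro i h1 h2
      exact (H i (Finset.mem_Icc.mpr ⟨h1, h2⟩)).2
    -- upper bound: f i ≤ i
    have hub : ∀ i, i ≤ k + 1 → extPermInv k σ i ≤ i := by
      intro i
      induction i with
      | zero => intro _; simp [extPermInv_zero]
      | succ n ih =>
        intro hn
        have hs := step (n + 1) (by omega) hn
        have := ih (by omega)
        simp only [Nat.add_sub_cancel] at hs
        omega
    -- downward induction: f (k+1-j) = k+1-j
    have hfix : ∀ j, j ≤ k + 1 → extPermInv k σ (k + 1 - j) = k + 1 - j := by
      intro j
      induction j with
      | zero => intro _; simpa using extPermInv_of_gt k σ (k + 1) (by omega)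
      | succ n ih =>
        intro hn
        have hi := ih (by omega)
        set i := k + 1 - n with hidef
        have h1 : 1 ≤ i := by omega
        have hs := step i h1 (by omega)
        have hub' := hub (i - 1) (by omega)
        have : k + 1 - (n + 1) = i - 1 := by omega
        rw [this]
        omega
    -- so σ⁻¹ = 1, hence σ = 1
    have hinv : σ⁻¹ = 1 := by
      ext x
      have hx : (x : ℕ) + 1 ≤ k + 1 := by have := x.isLt; omega
      have h1 := hfix (k + 1 - ((x : ℕ) + 1)) (by omega)
      rw [show k + 1 - (k + 1 - ((x : ℕ) + 1)) = (x : ℕ) + 1 from by omega] at h1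
      unfold extPermInv at h1
      rw [dif_pos ⟨by omega, by have := x.isLt; omega⟩] at h1
      simp only [Nat.add_sub_cancel, Fin.eta] at h1
      simp only [Equiv.Perm.coe_one, id_eq]
      omega
    have := congrArg Inv.inv hinv
    simpa using this
  · intro h
    subst h
    intro i hi
    rw [Finset.mem_Icc] at hi
    constructor
    · by_cases hik : i = k + 1
      · exact Or.inl (Or.inl hik)
      · right
        refine ⟨hi.1, by omega, ?_, ?_⟩
        · intro hp
          obtain ⟨_, _, h2, _⟩ := hp
          rw [extPermInv_one] at h2
          rw [extPerm_one, extPerm_one] at h2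
          omega
        · intro hp
          obtain ⟨_, hle, _, h3⟩ := hp
          rw [extPermInv_one] at hle h3
          rw [extPerm_one, extPerm_one] at h3
          omega
    · rw [extPermInv_one, extPermInv_one]
      omega
end

section
/- There is a constant C > 0 such that for all k ≥ 1 and all integers d ≥ 0, the number of permutations σ of {1,...,k} with degree d(σ) = d is at most (C k)^d. -/
open scoped Classical

/-! Let `f = σ̃⁻¹` on `{0, …, k+1}` and call the non-ladder indices breaks; there are `d(σ)` of
them. Between consecutive breaks `f` moves by `±1` at each step, so, being injective, it is affine
of slope `±1` there: `{0, …, k+1}` is cut into `d + 1` segments, each mapped onto an interval, and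
these intervals tile `{0, …, k+1}`. Hence `f j` is the total length of the segments whose values
lie below that of the segment of `j`, plus the position of `j` inside its own segment, read in the
segment's direction (`f 0 = 0` forces the first segment upwards). So `σ` is determined by the
`d`-set of triples (break, direction, rank of its segment) in `{1, …, k+1} × Bool × {0, …, d-1}`,
and there are at most `C(2d(k+1), d) ≤ (4ek)^d` such sets. -/

open Finset

namespace PermDegree

section Extension

variable (k : ℕ) (σ : Equiv.Perm (Fin k))

theorem extPerm_extPermInv (i : ℕ) : extPerm k σ (extPermInv k σ i) = i := by
  unfold extPerm extPermInv
  split_ifs with h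
  · simp
    omega
  · have := (σ⁻¹ ⟨i - 1, by omega⟩).isLt
    omega
  · rfl

theorem extPermInv_extPerm (j : ℕ) : extPermInv k σ (extPerm k σ j) = j := by
  unfold extPerm extPermInv
  split_ifs with h
  · simp
    omega
  · have := (σ ⟨j - 1, by omega⟩).isLt
    omega
  · rfl

theorem extPermInv_injective : Function.Injective (extPermInv k σ) :=
  Function.LeftInverse.injective (extPerm_extPermInv k σ)

theorem extPerm_le {j : ℕ} (hj : j ≤ k + 1) : extPerm k σ j ≤ k + 1 := by
  unfold extPerm
  split_ifs with h
  · have := (σ ⟨j - 1, by omega⟩).isLt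
    omega
  · exact hj

theorem extPermInv_zero : extPermInv k σ 0 = 0 := rfl

theorem extPermInv_succ (m : Fin k) : extPermInv k σ (m + 1) = (σ⁻¹ m : ℕ) + 1 := by
  simp [extPermInv]

end Extension

theorem eq_add_mul_of_natAbs_sub_eq_one {g : ℕ → ℤ} {a b : ℕ} (hinj : Set.InjOn g (Set.Icc a b))
    (hstep : ∀ i, a < i → i ≤ b → (g i - g (i - 1)).natAbs = 1) :
    ∀ i, a ≤ i → i ≤ b → g i = g a + (g (a + 1) - g a) * (i - a) := by
  set s := g (a + 1) - g a
  suffices h : ∀ i, a ≤ i → i ≤ b → g i = g a + s * (i - a) ∧ (a < i → g i - g (i - 1) = s) from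
    fun i hai hib => (h i hai hib).1
  intro i hai
  induction i, hai using Nat.le_induction with
  | base => simp
  | succ i hai ih =>
    intro hib
    obtain ⟨hi, hsi⟩ := ih (by omega)
    have hstep' : g (i + 1) - g i = s := by
      rcases hai.eq_or_lt with rfl | hai
      · rfl
      have h1 := hstep (i + 1) (by omega) hib
      have h2 := hstep i hai (by omega)
      have h3 := hsi hai
      simp only [Nat.add_sub_cancel] at h1
      by_contra hne
      have : g (i + 1) = g (i - 1) := by omega
      have := hinj ⟨by omega, hib⟩ ⟨by omega, by omega⟩ this
      omega
    refine ⟨?_, fun _ => by simpa using hstep'⟩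
    push_cast
    linear_combination hstep' + hi

section Segment

variable {N : ℕ} {B : Finset ℕ} {i j x : ℕ}

def segStart (B : Finset ℕ) (j : ℕ) : ℕ :=
  ((insert 0 B).filter (· ≤ j)).max' ⟨0, by simp⟩

def segment (N : ℕ) (B : Finset ℕ) (x : ℕ) : Finset ℕ :=
  (Iic N).filter (segStart B · = x)

theorem segStart_mem (B : Finset ℕ) (j : ℕ) : segStart B j ∈ insert 0 B :=
  (mem_filter.1 (max'_mem _ _)).1

theorem segStart_le (B : Finset ℕ) (j : ℕ) : segStart B j ≤ j :=
  (mem_filter.1 (max'_mem ((insert 0 B).filter (· ≤ j)) _)).2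

theorem le_segStart (hx : x ∈ insert 0 B) (hxj : x ≤ j) : x ≤ segStart B j :=
  le_max' _ _ (mem_filter.2 ⟨hx, hxj⟩)

theorem notMem_of_segStart_lt (hi : segStart B j < i) (hij : i ≤ j) : i ∉ B := fun hiB =>
  (le_segStart (mem_insert_of_mem hiB) hij).not_gt hi

theorem segStart_eq_of_le (h : segStart B j = x) (hxi : x ≤ i) (hij : i ≤ j) :
    segStart B i = x := by
  have := le_segStart (segStart_mem B i) ((segStart_le B i).trans hij)
  have := le_segStart (h ▸ segStart_mem B j) hxi
  omega

theorem mem_segment : j ∈ segment N B x ↔ j ≤ N ∧ segStart B j = x := by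
  simp [segment]

theorem le_of_mem_segment (hj : j ∈ segment N B x) : x ≤ j :=
  (mem_segment.1 hj).2 ▸ segStart_le B j

theorem mem_segment_of_le (hj : j ∈ segment N B x) (hxi : x ≤ i) (hij : i ≤ j) :
    i ∈ segment N B x := by
  rw [mem_segment] at hj ⊢
  exact ⟨hij.trans hj.1, segStart_eq_of_le hj.2 hxi hij⟩

theorem self_mem_segment (hj : j ∈ segment N B x) : x ∈ segment N B x :=
  mem_segment_of_le hj le_rfl (le_of_mem_segment hj)

end Segment

theorem lt_of_ordConnected_of_disjoint {α : Type*} [LinearOrder α] {s t : Set α}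
    (hs : s.OrdConnected) (ht : t.OrdConnected) (hst : Disjoint s t) {a a' b b' : α}
    (ha : a ∈ s) (ha' : a' ∈ s) (hb : b ∈ t) (hb' : b' ∈ t) (hab : a < b) : a' < b' := by
  by_contra! hba
  rcases le_or_gt b a' with hba' | hab'
  · exact Set.disjoint_left.1 hst (hs.out ha ha' ⟨hab.le, hba'⟩) hb
  · exact Set.disjoint_left.1 hst ha' (ht.out hb' hb ⟨hba, hab'.le⟩)

section IsBreakSet

structure IsBreakSet (N : ℕ) (f : ℕ → ℕ) (B : Finset ℕ) : Prop where
  bijOn : Set.BijOn f (Set.Iic N) (Set.Iic N)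
  map_zero : f 0 = 0
  natAbs_sub_eq_one : ∀ j ∈ Icc 1 N, j ∉ B → ((f j : ℤ) - f (j - 1)).natAbs = 1

variable {N : ℕ} {B : Finset ℕ} {f : ℕ → ℕ} {i j x y : ℕ}

theorem IsBreakSet.natAbs_sub_eq_one_of_mem_segment (hf : IsBreakSet N f B)
    (hj : j ∈ segment N B x) (hxj : x < j) : ((f j : ℤ) - f (j - 1)).natAbs = 1 := by
  rw [mem_segment] at hj
  refine hf.natAbs_sub_eq_one j (mem_Icc.2 ⟨by omega, hj.1⟩) ?_
  exact notMem_of_segStart_lt (by omega) le_rfl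

theorem IsBreakSet.eq_of_mem_segment (hf : IsBreakSet N f B) (hj : j ∈ segment N B x) :
    (f j : ℤ) = f x + (f (x + 1) - f x) * (j - x) := by
  have hinj : Set.InjOn (fun i => (f i : ℤ)) (Set.Icc x j) := fun a ha b hb hab =>
    hf.bijOn.injOn (ha.2.trans (mem_segment.1 hj).1) (hb.2.trans (mem_segment.1 hj).1)
      (Nat.cast_injective hab)
  refine eq_add_mul_of_natAbs_sub_eq_one hinj (fun i hxi hij => ?_) j (le_of_mem_segment hj) le_rfl
  exact hf.natAbs_sub_eq_one_of_mem_segment (mem_segment_of_le hj hxi.le hij) hxi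

theorem IsBreakSet.slope_eq_one_or (hf : IsBreakSet N f B) (hi : i ∈ segment N B x)
    (hj : j ∈ segment N B x) (hij : i ≠ j) :
    (f (x + 1) : ℤ) - f x = 1 ∨ (f (x + 1) : ℤ) - f x = -1 := by
  wlog hlt : i < j generalizing i j
  · exact this hj hi hij.symm (hij.symm.lt_of_le (not_lt.1 hlt))
  have hx1 : x + 1 ∈ segment N B x :=
    mem_segment_of_le hj (Nat.le_succ x) ((le_of_mem_segment hi).trans_lt hlt)
  have := hf.natAbs_sub_eq_one_of_mem_segment hx1 (Nat.lt_succ_self x)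
  simp only [Nat.add_sub_cancel] at this
  omega

theorem IsBreakSet.lt_iff_of_mem_segment (hf : IsBreakSet N f B) (hi : i ∈ segment N B x)
    (hj : j ∈ segment N B x) : f i < f j ↔ if f x < f (x + 1) then i < j else j < i := by
  rcases eq_or_ne i j with rfl | hne
  · simp
  have hslope := hf.slope_eq_one_or hi hj hne
  have hfi := hf.eq_of_mem_segment hi
  have hfj := hf.eq_of_mem_segment hj
  rcases hslope with hs | hs <;> rw [hs] at hfi hfj <;> split_ifs <;> omega

theorem IsBreakSet.ordConnected_image_segment (hf : IsBreakSet N f B) :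
    (f '' segment N B x).OrdConnected := by
  refine ⟨?_⟩
  rintro _ ⟨i, hi, rfl⟩ _ ⟨j, hj, rfl⟩ v ⟨hiv, hvj⟩
  rcases eq_or_ne i j with rfl | hne
  · exact ⟨i, hi, le_antisymm hiv hvj⟩
  have hslope := hf.slope_eq_one_or hi hj hne
  have hfi := hf.eq_of_mem_segment hi
  have hfj := hf.eq_of_mem_segment hj
  have hxi := le_of_mem_segment hi
  have hxj := le_of_mem_segment hj
  rcases hslope with hs | hs <;> rw [hs] at hfi hfj
  · have hl : v + x - f x ∈ segment N B x := mem_segment_of_le hj (by omega) (by omega)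
    have hfl := hf.eq_of_mem_segment hl
    rw [hs] at hfl
    exact ⟨_, hl, by omega⟩
  · have hl : f x + x - v ∈ segment N B x := mem_segment_of_le hi (by omega) (by omega)
    have hfl := hf.eq_of_mem_segment hl
    rw [hs] at hfl
    exact ⟨_, hl, by omega⟩

theorem IsBreakSet.disjoint_image_segment (hf : IsBreakSet N f B) (hxy : x ≠ y) :
    Disjoint (f '' segment N B x) (f '' segment N B y) := by
  refine Set.disjoint_left.2 ?_
  rintro _ ⟨i, hi, rfl⟩ ⟨j, hj, hji⟩
  rw [mem_coe, mem_segment] at hi hj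
  obtain rfl := hf.bijOn.injOn hj.1 hi.1 hji
  exact hxy (hi.2.symm.trans hj.2)

theorem IsBreakSet.lt_iff_of_mem_segment_of_ne (hf : IsBreakSet N f B)
    (hi : i ∈ segment N B x) (hj : j ∈ segment N B y) (hxy : x ≠ y) : f i < f j ↔ f x < f y := by
  have hx := Set.mem_image_of_mem f (self_mem_segment hi)
  have hy := Set.mem_image_of_mem f (self_mem_segment hj)
  have hfi := Set.mem_image_of_mem f hi
  have hfj := Set.mem_image_of_mem f hj
  have hconn := hf.ordConnected_image_segment (x := x)
  have hconn' := hf.ordConnected_image_segment (x := y)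
  have hne : f x ≠ f y := fun h =>
    hxy (hf.bijOn.injOn (mem_segment.1 (self_mem_segment hi)).1
      (mem_segment.1 (self_mem_segment hj)).1 h)
  refine ⟨fun h => ?_, lt_of_ordConnected_of_disjoint hconn hconn' (hf.disjoint_image_segment hxy)
    hx hfi hy hfj⟩
  by_contra! hyx
  exact (lt_of_ordConnected_of_disjoint hconn' hconn (hf.disjoint_image_segment hxy.symm) hy hfj hx
    hfi (hyx.lt_of_ne hne.symm)).not_gt h

theorem IsBreakSet.card_filter_lt (hf : IsBreakSet N f B) (hj : j ≤ N) :
    #{i ∈ Iic N | f i < f j} = f j := by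
  have hfj : f j ≤ N := hf.bijOn.mapsTo (Set.mem_Iic.2 hj)
  calc #{i ∈ Iic N | f i < f j} = #({i ∈ Iic N | f i < f j}.image f) :=
        (card_image_of_injOn (hf.bijOn.injOn.mono (by intro i; simp_all))).symm
    _ = #(range (f j)) := by
        congr 1
        ext v
        simp only [mem_image, mem_filter, mem_Iic, mem_range]
        refine ⟨fun ⟨i, ⟨_, hlt⟩, hv⟩ => hv ▸ hlt, fun hv => ?_⟩
        obtain ⟨i, hi, rfl⟩ := hf.bijOn.surjOn (Set.mem_Iic.2 (by omega : v ≤ N))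
        exact ⟨i, ⟨hi, hv⟩, rfl⟩
    _ = f j := card_range _

theorem IsBreakSet.card_filter_segment_lt (hf : IsBreakSet N f B) (hj : j ∈ segment N B x)
    (hy : y ∈ insert 0 B) :
    #{i ∈ segment N B y | f i < f j} = (if f y < f x then #(segment N B y) else 0) +
      if x = y then #{i ∈ segment N B x | if f x < f (x + 1) then i < j else j < i} else 0 := by
  rcases eq_or_ne x y with rfl | hxy
  · simp only [lt_irrefl, if_false, if_true, zero_add]
    exact congrArg card (filter_congr fun i hi => hf.lt_iff_of_mem_segment hi hj)
  · rw [if_neg hxy, add_zero,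
      filter_congr fun i hi => hf.lt_iff_of_mem_segment_of_ne hi hj hxy.symm]
    split_ifs with h
    · rw [filter_true_of_mem fun _ _ => h]
    · rw [filter_false_of_mem fun _ _ => h, card_empty]

theorem IsBreakSet.eq_sum_card (hf : IsBreakSet N f B) (hj : j ≤ N) :
    f j = ∑ y ∈ insert 0 B with f y < f (segStart B j), #(segment N B y) +
      #{i ∈ segment N B (segStart B j) |
        if f (segStart B j) < f (segStart B j + 1) then i < j else j < i} := by
  set x := segStart B j
  have hjx : j ∈ segment N B x := mem_segment.2 ⟨hj, rfl⟩
  have hmaps : Set.MapsTo (segStart B) ↑{i ∈ Iic N | f i < f j} ↑(insert 0 B) :=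
    fun i _ => segStart_mem B i
  set c := #{i ∈ segment N B x | if f x < f (x + 1) then i < j else j < i}
  have hc : c = ∑ y ∈ insert 0 B, if x = y then c else 0 := by
    rw [sum_ite_eq, if_pos (segStart_mem B j)]
  rw [← hf.card_filter_lt hj, card_eq_sum_card_fiberwise hmaps, sum_filter, hc,
    ← sum_add_distrib]
  refine sum_congr rfl fun y hy => ?_
  rw [← hf.card_filter_segment_lt hjx hy, filter_filter]
  congr 1
  ext i
  simp only [mem_filter, mem_segment, mem_Iic]
  tauto

theorem IsBreakSet.pos_of_ne_zero (hf : IsBreakSet N f B) (hj : j ≤ N) (hj0 : j ≠ 0) : 0 < f j := by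
  refine Nat.pos_of_ne_zero fun h => hj0 ?_
  exact hf.bijOn.injOn (Set.mem_Iic.2 hj) (Set.mem_Iic.2 (Nat.zero_le N)) (h.trans hf.map_zero.symm)

theorem IsBreakSet.eqOn {g : ℕ → ℕ} (hf : IsBreakSet N f B) (hg : IsBreakSet N g B)
    (hB : B ⊆ Iic N) (hup : ∀ x ∈ B, f x < f (x + 1) ↔ g x < g (x + 1))
    (hlt : ∀ x ∈ B, ∀ y ∈ B, f x < f y ↔ g x < g y) : Set.EqOn f g (Set.Iic N) := by
  intro j hj
  rw [Set.mem_Iic] at hj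
  rcases Nat.eq_zero_or_pos N with rfl | hN
  · rw [Nat.le_zero.1 hj, hf.map_zero, hg.map_zero]
  have hle : ∀ x ∈ insert 0 B, x ≤ N := fun x hx => by
    rcases mem_insert.1 hx with rfl | hx
    exacts [Nat.zero_le N, mem_Iic.1 (hB hx)]
  have hup' : ∀ x ∈ insert 0 B, f x < f (x + 1) ↔ g x < g (x + 1) := fun x hx => by
    rcases mem_insert.1 hx with rfl | hx
    · simp only [hf.map_zero, hg.map_zero, zero_add, hf.pos_of_ne_zero hN one_ne_zero,
        hg.pos_of_ne_zero hN one_ne_zero]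
    · exact hup x hx
  have hlt' : ∀ x ∈ insert 0 B, ∀ y ∈ insert 0 B, f x < f y ↔ g x < g y := fun x hx y hy => by
    rcases eq_or_ne y 0 with rfl | hy0
    · simp [hf.map_zero, hg.map_zero]
    rcases mem_insert.1 hx with rfl | hx
    · simp only [hf.map_zero, hg.map_zero, hf.pos_of_ne_zero (hle y hy) hy0,
        hg.pos_of_ne_zero (hle y hy) hy0]
    · exact hlt x hx y ((mem_insert.1 hy).resolve_left hy0)
  have hx := segStart_mem B j
  rw [hf.eq_sum_card hj, hg.eq_sum_card hj, filter_congr fun y hy => hlt' y hy _ hx]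
  simp only [hup' _ hx]

end IsBreakSet

section Rank

variable {α β : Type*} [LinearOrder β] {f : α → β} {s : Finset α} {a b : α}

def rank (f : α → β) (s : Finset α) (a : α) : ℕ := #{b ∈ s | f b < f a}

theorem rank_lt_card (ha : a ∈ s) : rank f s a < #s :=
  card_lt_card (filter_ssubset.2 ⟨a, ha, lt_irrefl _⟩)

theorem rank_le_rank (h : f a ≤ f b) : rank f s a ≤ rank f s b :=
  card_le_card fun c hc => by
    rw [mem_filter] at hc ⊢
    exact ⟨hc.1, hc.2.trans_le h⟩

theorem rank_lt_rank_iff (ha : a ∈ s) : rank f s a < rank f s b ↔ f a < f b := by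
  refine ⟨fun h => lt_of_not_ge fun hba => (rank_le_rank hba).not_gt h, fun h => ?_⟩
  refine card_lt_card <|
    (ssubset_iff_of_subset fun c hc => ?_).2 ⟨a, mem_filter.2 ⟨ha, h⟩, by simp⟩
  rw [mem_filter] at hc ⊢
  exact ⟨hc.1, hc.2.trans h⟩

end Rank

-- `f i < f (i + 1)` is the direction of the segment starting at `i`; it is junk, and irrelevant,
-- when that segment is `{i}`.
def code (f : ℕ → ℕ) (B : Finset ℕ) : Finset (ℕ × Bool × ℕ) :=
  B.image fun i => (i, decide (f i < f (i + 1)), rank f B i)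

theorem image_fst_code (f : ℕ → ℕ) (B : Finset ℕ) : (code f B).image Prod.fst = B := by
  simp [code, image_image, Function.comp_def]

theorem IsBreakSet.eqOn_of_code_eq {N : ℕ} {B C : Finset ℕ} {f g : ℕ → ℕ} (hf : IsBreakSet N f B)
    (hg : IsBreakSet N g C) (hB : B ⊆ Iic N) (h : code f B = code g C) :
    Set.EqOn f g (Set.Iic N) := by
  obtain rfl : B = C := by rw [← image_fst_code f B, ← image_fst_code g C, h]
  have hdata : ∀ i ∈ B,
      decide (f i < f (i + 1)) = decide (g i < g (i + 1)) ∧ rank f B i = rank g B i := by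
    intro i hi
    obtain ⟨i', -, he⟩ := mem_image.1 (h ▸ mem_image_of_mem _ hi :
      (i, decide (f i < f (i + 1)), rank f B i) ∈ code g B)
    simp only [Prod.mk.injEq] at he
    obtain ⟨rfl, hup, hrank⟩ := he
    exact ⟨hup.symm, hrank.symm⟩
  refine hf.eqOn hg hB (fun x hx => by simpa using (hdata x hx).1) (fun x hx y hy => ?_)
  rw [← rank_lt_rank_iff (f := f) hx, ← rank_lt_rank_iff (f := g) hx, (hdata x hx).2,
    (hdata y hy).2]

section Breaks

variable (k : ℕ) (σ : Equiv.Perm (Fin k))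

noncomputable def breaks : Finset ℕ := {i ∈ Icc 1 (k + 1) | ¬ IsLadderIdx k σ i}

theorem card_breaks : #(breaks k σ) = degree k σ := by
  have := card_filter_add_card_filter_not (s := Icc 1 (k + 1)) fun i => IsLadderIdx k σ i
  rw [Nat.card_Icc] at this
  unfold degree ladderCount breaks
  omega

theorem isBreakSet_extPermInv : IsBreakSet (k + 1) (extPermInv k σ) (breaks k σ) where
  bijOn := by
    refine ⟨fun i hi => extPerm_le k σ⁻¹ hi, (extPermInv_injective k σ).injOn, fun v hv => ?_⟩
    exact ⟨extPerm k σ v, extPerm_le k σ hv, extPermInv_extPerm k σ v⟩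
  map_zero := extPermInv_zero k σ
  natAbs_sub_eq_one j hj hjB := (by simpa [breaks, hj] using hjB : IsLadderIdx k σ j).2

theorem code_mem_powersetCard :
    code (extPermInv k σ) (breaks k σ) ∈
      powersetCard (degree k σ) (Icc 1 (k + 1) ×ˢ (univ ×ˢ range (degree k σ))) := by
  refine mem_powersetCard.2 ⟨fun p hp => ?_, ?_⟩
  · obtain ⟨i, hi, rfl⟩ := mem_image.1 hp
    have := card_breaks k σ ▸ rank_lt_card (f := extPermInv k σ) hi
    simp only [mem_product, mem_univ, mem_range, true_and]
    exact ⟨(mem_filter.1 hi).1, this⟩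
  · rw [code, card_image_of_injective _ fun i j h => congrArg Prod.fst h, card_breaks]

end Breaks

theorem eq_of_eqOn_extPermInv {k : ℕ} {σ τ : Equiv.Perm (Fin k)}
    (h : Set.EqOn (extPermInv k σ) (extPermInv k τ) (Set.Iic (k + 1))) : σ = τ := by
  refine inv_injective (Equiv.ext fun m => Fin.ext ?_)
  have := h (Set.mem_Iic.2 (by omega : (m : ℕ) + 1 ≤ k + 1))
  rw [extPermInv_succ, extPermInv_succ] at this
  omega

theorem card_degree_eq_le_choose (k d : ℕ) :
    #{σ : Equiv.Perm (Fin k) | degree k σ = d} ≤ ((k + 1) * (2 * d)).choose d := by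
  calc #{σ : Equiv.Perm (Fin k) | degree k σ = d}
      ≤ #(powersetCard d (Icc 1 (k + 1) ×ˢ (univ ×ˢ range d))) := by
        refine card_le_card_of_injOn (fun σ => code (extPermInv k σ) (breaks k σ)) ?_ ?_
        · intro σ hσ
          have hσ : degree k σ = d := (mem_filter.1 hσ).2
          simpa [hσ] using code_mem_powersetCard k σ
        · intro σ _ τ _ h
          refine eq_of_eqOn_extPermInv ((isBreakSet_extPermInv k σ).eqOn_of_code_eq
            (isBreakSet_extPermInv k τ) (fun i hi => ?_) h)
          exact mem_Iic.2 (mem_Icc.1 (mem_filter.1 hi).1).2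
    _ = ((k + 1) * (2 * d)).choose d := by simp

theorem choose_le_pow (k d : ℕ) (hk : 1 ≤ k) :
    (((k + 1) * (2 * d)).choose d : ℝ) ≤ (4 * Real.exp 1 * k) ^ d := by
  have hk' : (1 : ℝ) ≤ k := by exact_mod_cast hk
  calc (((k + 1) * (2 * d)).choose d : ℝ)
      ≤ (((k + 1) * (2 * d) : ℕ) : ℝ) ^ d / d.factorial := Nat.choose_le_pow_div d _
    _ ≤ (4 * k * d : ℝ) ^ d / d.factorial := by
        gcongr
        push_cast
        nlinarith [(Nat.cast_nonneg d : (0 : ℝ) ≤ d)]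
    _ = (4 * k) ^ d * ((d : ℝ) ^ d / d.factorial) := by rw [mul_pow, mul_div_assoc]
    _ ≤ (4 * k) ^ d * Real.exp d := by
        gcongr
        exact Real.pow_div_factorial_le_exp _ d.cast_nonneg d
    _ = (4 * Real.exp 1 * k) ^ d := by rw [← Real.exp_one_pow]; ring

end PermDegree

/-- There is a constant `C > 0` such that for all `k ≥ 1` and all `d`, the number of
permutations of `{1,…,k}` of degree `d` is at most `(C k)^d`. -/
theorem card_degree_eq_le :
    ∃ C : ℝ, 0 < C ∧ ∀ k : ℕ, 1 ≤ k → ∀ d : ℕ,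
      ((Finset.univ.filter fun σ : Equiv.Perm (Fin k) => degree k σ = d).card : ℝ) ≤
        (C * k) ^ d := by
  refine ⟨4 * Real.exp 1, by positivity, fun k hk d => ?_⟩
  calc ((Finset.univ.filter fun σ : Equiv.Perm (Fin k) => degree k σ = d).card : ℝ)
      ≤ ((k + 1) * (2 * d)).choose d := by exact_mod_cast PermDegree.card_degree_eq_le_choose k d
    _ ≤ (4 * Real.exp 1 * k) ^ d := PermDegree.choose_le_pow k d hk
end

section
/- For b ∈ ℝ, k ≥ 0, and s > 0, the contour/residue computation gives ∫_ℝ (−i/(b−i))^{k+1} e^{isb} db / (2π) = e^{-s} s^k / k!. -/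
/-!
Since `-i/(b - i) = (1 + ib)⁻¹`, the integrand is `(1 + ib)^{-(k+1)} e^{isb}`. Instead of closing
the contour, we recognise it through Fourier analysis: the Laplace integral
`∫₀^∞ tᵏ e^{-(1 + 2πiξ)t} dt = k!/(1 + 2πiξ)^{k+1}` is the Fourier transform of `tᵏ e⁻ᵗ 1_{t>0}`.
For `k ≥ 1` this transform is integrable, so Fourier inversion at the continuity point `s > 0`,
followed by the substitution `b = 2πξ`, gives the value `2π sᵏ e⁻ˢ / k!` of the full integral.
For `k = 0` the integrand is not integrable; one integration by parts on `[-R, R]` expresses its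
integral through the `k = 1` integral plus boundary terms that vanish as `R → ∞`.
-/

open MeasureTheory Filter Set Complex FourierTransform

section LaplaceTransform

variable {c : ℂ}

lemma norm_ofReal_pow_mul_cexp_neg_mul (m : ℕ) (c : ℂ) {t : ℝ} (ht : 0 ≤ t) :
    ‖(t : ℂ) ^ m * cexp (-(c * t))‖ = t ^ m * Real.exp (-c.re * t) := by
  simp [norm_exp, abs_of_nonneg ht]

lemma tendsto_ofReal_pow_mul_cexp_neg_mul_atTop (hc : 0 < c.re) (m : ℕ) :
    Tendsto (fun t : ℝ => (t : ℂ) ^ m * cexp (-(c * t))) atTop (nhds 0) := by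
  rw [tendsto_zero_iff_norm_tendsto_zero]
  refine (tendsto_rpow_mul_exp_neg_mul_atTop_nhds_zero m c.re hc).congr' ?_
  filter_upwards [eventually_ge_atTop 0] with t ht
  rw [norm_ofReal_pow_mul_cexp_neg_mul m c ht, Real.rpow_natCast]

lemma integrableOn_ofReal_pow_mul_cexp_neg_mul_Ioi (hc : 0 < c.re) (m : ℕ) :
    IntegrableOn (fun t : ℝ => (t : ℂ) ^ m * cexp (-(c * t))) (Ioi 0) := by
  have h : IntegrableOn (fun t : ℝ => t ^ m * Real.exp (-c.re * t)) (Ioi 0) := by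
    refine (integrableOn_rpow_mul_exp_neg_mul_rpow (p := 1) (s := m)
      (neg_one_lt_zero.trans_le m.cast_nonneg) one_pos hc).congr_fun (fun t _ => ?_)
      measurableSet_Ioi
    simp [Real.rpow_natCast]
  refine h.mono' (by fun_prop) ?_
  filter_upwards [ae_restrict_mem measurableSet_Ioi] with t ht
  exact (norm_ofReal_pow_mul_cexp_neg_mul m c (le_of_lt ht)).le

lemma hasDerivAt_ofReal_pow_succ_mul_cexp_neg_mul (c : ℂ) (m : ℕ) (t : ℝ) :
    HasDerivAt (fun t : ℝ => (t : ℂ) ^ (m + 1) * cexp (-(c * t)))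
      ((m + 1 : ℂ) * ((t : ℂ) ^ m * cexp (-(c * t)))
        - c * ((t : ℂ) ^ (m + 1) * cexp (-(c * t)))) t := by
  have hpow : HasDerivAt (fun t : ℝ => (t : ℂ) ^ (m + 1)) ((m + 1 : ℂ) * (t : ℂ) ^ m) t :=
    by
    simpa using (hasDerivAt_pow (m + 1) (t : ℂ)).comp_ofReal
  have hexp : HasDerivAt (fun t : ℝ => cexp (-(c * t))) (-c * cexp (-(c * t))) t := by
    simpa [mul_comm] using (((hasDerivAt_id (t : ℂ)).const_mul c).neg.cexp).comp_ofReal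
  exact (hpow.fun_mul hexp).congr_deriv (by ring)

lemma integral_ofReal_pow_mul_cexp_neg_mul_Ioi (hc : 0 < c.re) (m : ℕ) :
    ∫ t in Ioi (0 : ℝ), (t : ℂ) ^ m * cexp (-(c * t)) = m.factorial / c ^ (m + 1) := by
  have hc0 : c ≠ 0 := fun h => by simp [h] at hc
  induction m with
  | zero =>
    have := integral_exp_mul_complex_Ioi (a := -c) (by simpa using hc) 0
    simpa using this
  | succ m ih =>
    have key := integral_Ioi_of_hasDerivAt_of_tendsto' (a := 0)
      (f := fun t : ℝ => (t : ℂ) ^ (m + 1) * cexp (-(c * t)))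
      (f' := fun t : ℝ => (m + 1 : ℂ) * ((t : ℂ) ^ m * cexp (-(c * t)))
        - c * ((t : ℂ) ^ (m + 1) * cexp (-(c * t))))
      (fun t _ => hasDerivAt_ofReal_pow_succ_mul_cexp_neg_mul c m t)
      (((integrableOn_ofReal_pow_mul_cexp_neg_mul_Ioi hc m).const_mul _).sub
        ((integrableOn_ofReal_pow_mul_cexp_neg_mul_Ioi hc (m + 1)).const_mul _))
      (tendsto_ofReal_pow_mul_cexp_neg_mul_atTop hc (m + 1))
    rw [integral_sub ((integrableOn_ofReal_pow_mul_cexp_neg_mul_Ioi hc m).const_mul _)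
      ((integrableOn_ofReal_pow_mul_cexp_neg_mul_Ioi hc (m + 1)).const_mul _),
      integral_const_mul, integral_const_mul, ih] at key
    rw [ofReal_zero, zero_pow m.succ_ne_zero, zero_mul, sub_zero] at key
    rw [Nat.factorial_succ, Nat.cast_mul, pow_succ, eq_div_iff (by simp [hc0])]
    field_simp at key
    push_cast
    linear_combination -key

end LaplaceTransform

lemma one_add_ofReal_mul_I_ne_zero (b : ℝ) : (1 + b * I : ℂ) ≠ 0 := by
  intro h
  simpa using congrArg re h

lemma sq_norm_one_add_ofReal_mul_I (b : ℝ) : ‖(1 + b * I : ℂ)‖ ^ 2 = 1 + b ^ 2 := by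
  rw [Complex.sq_norm, normSq_apply]
  simp
  ring

lemma one_le_norm_one_add_ofReal_mul_I (b : ℝ) : 1 ≤ ‖(1 + b * I : ℂ)‖ := by
  nlinarith [sq_norm_one_add_ofReal_mul_I b, norm_nonneg (1 + b * I : ℂ), sq_nonneg b]

lemma abs_le_norm_one_add_ofReal_mul_I (b : ℝ) : |b| ≤ ‖(1 + b * I : ℂ)‖ := by
  nlinarith [sq_norm_one_add_ofReal_mul_I b, norm_nonneg (1 + b * I : ℂ), sq_abs b, abs_nonneg b]

lemma neg_I_div_ofReal_sub_I (b : ℝ) : -I / (b - I) = (1 + b * I)⁻¹ := by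
  have h : (b - I : ℂ) ≠ 0 := fun h => by simpa using congrArg im h
  rw [inv_eq_one_div, div_eq_div_iff h (one_add_ofReal_mul_I_ne_zero b)]
  linear_combination -(b : ℂ) * I_sq

lemma integrable_inv_one_add_ofReal_mul_I_pow {n : ℕ} (hn : 2 ≤ n) :
    Integrable fun b : ℝ => ((1 + b * I : ℂ) ^ n)⁻¹ := by
  refine integrable_inv_one_add_sq.mono' (by fun_prop) (ae_of_all _ fun b => ?_)
  have h := pow_le_pow_right₀ (one_le_norm_one_add_ofReal_mul_I b) hn
  rw [sq_norm_one_add_ofReal_mul_I] at h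
  rw [norm_inv, norm_pow]
  exact inv_anti₀ (by positivity) h

noncomputable def gammaKernel (m : ℕ) : ℝ → ℂ :=
  (Ioi 0).indicator fun t => (t : ℂ) ^ m * cexp (-t)

noncomputable def residueIntegrand (s : ℝ) (n : ℕ) (b : ℝ) : ℂ :=
  ((1 + b * I) ^ n)⁻¹ * cexp (I * s * b)

lemma integrable_gammaKernel (m : ℕ) : Integrable (gammaKernel m) := by
  rw [gammaKernel, integrable_indicator_iff measurableSet_Ioi]
  simpa using integrableOn_ofReal_pow_mul_cexp_neg_mul_Ioi (c := 1) one_pos m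

lemma fourier_gammaKernel (m : ℕ) (ξ : ℝ) :
    𝓕 (gammaKernel m) ξ
      = m.factorial * ((1 + (2 * Real.pi * ξ : ℝ) * I) ^ (m + 1))⁻¹ := by
  have hre : 0 < (1 + (2 * Real.pi * ξ : ℝ) * I : ℂ).re := by simp
  rw [← div_eq_mul_inv, ← integral_ofReal_pow_mul_cexp_neg_mul_Ioi hre,
    Real.fourier_real_eq_integral_exp_smul, gammaKernel, ← integral_indicator measurableSet_Ioi]
  congr 1 with t
  by_cases ht : t ∈ Ioi 0
  · rw [indicator_of_mem ht, indicator_of_mem ht, smul_eq_mul, mul_left_comm, ← Complex.exp_add]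
    push_cast
    ring_nf
  · rw [indicator_of_notMem ht, indicator_of_notMem ht, smul_zero]

lemma integral_residueIntegrand {s : ℝ} (hs : 0 < s) {m : ℕ} (hm : 1 ≤ m) :
    ∫ b, residueIntegrand s (m + 1) b = 2 * Real.pi * (s ^ m * cexp (-s) / m.factorial) := by
  have hF : Integrable (𝓕 (gammaKernel m)) := by
    rw [funext (fourier_gammaKernel m)]
    exact ((integrable_inv_one_add_ofReal_mul_I_pow (by omega)).comp_mul_left'
      (by positivity : 2 * Real.pi ≠ 0)).const_mul _
  have hcont : ContinuousAt (gammaKernel m) s :=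
    (by fun_prop : Continuous fun t : ℝ => (t : ℂ) ^ m * cexp (-t)).continuousAt.congr
      (by filter_upwards [Ioi_mem_nhds hs] with t ht; rw [gammaKernel, indicator_of_mem ht])
  have hinv := (integrable_gammaKernel m).fourierInv_fourier_eq hF hcont
  rw [Real.fourierInv_eq_fourier_neg, Real.fourier_real_eq_integral_exp_smul] at hinv
  have hintegrand : ∀ v : ℝ, cexp (↑(-2 * Real.pi * v * -s) * I) • 𝓕 (gammaKernel m) v
      = m.factorial * residueIntegrand s (m + 1) (2 * Real.pi * v) := fun v => by
    rw [fourier_gammaKernel, residueIntegrand, smul_eq_mul]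
    push_cast
    ring_nf
  simp_rw [hintegrand, integral_const_mul, Measure.integral_comp_mul_left, gammaKernel,
    indicator_of_mem (show s ∈ Ioi 0 from hs)] at hinv
  rw [abs_of_pos (inv_pos.mpr Real.two_pi_pos), real_smul] at hinv
  push_cast at hinv
  have hπ : (Real.pi : ℂ) ≠ 0 := ofReal_ne_zero.mpr Real.pi_ne_zero
  have hfac : (m.factorial : ℂ) ≠ 0 := Nat.cast_ne_zero.mpr m.factorial_ne_zero
  field_simp at hinv ⊢
  linear_combination hinv

lemma continuous_residueIntegrand (s : ℝ) (n : ℕ) : Continuous (residueIntegrand s n) :=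
  (continuous_const.add (continuous_ofReal.mul continuous_const)).pow n |>.inv₀
    (fun b => pow_ne_zero _ (one_add_ofReal_mul_I_ne_zero b)) |>.mul (by fun_prop)

lemma norm_residueIntegrand (s : ℝ) (n : ℕ) (b : ℝ) :
    ‖residueIntegrand s n b‖ = ‖(1 + b * I : ℂ)‖⁻¹ ^ n := by
  rw [residueIntegrand, norm_mul, norm_exp, norm_inv, norm_pow, inv_pow]
  simp

lemma tendsto_residueIntegrand_cocompact (s : ℝ) {n : ℕ} (hn : n ≠ 0) :
    Tendsto (residueIntegrand s n) (cocompact ℝ) (nhds 0) := by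
  rw [tendsto_zero_iff_norm_tendsto_zero]
  simp_rw [norm_residueIntegrand]
  have h : Tendsto (fun b : ℝ => ‖(1 + b * I : ℂ)‖) (cocompact ℝ) atTop :=
    tendsto_atTop_mono
      (fun b => (Real.norm_eq_abs b).trans_le (abs_le_norm_one_add_ofReal_mul_I b))
      tendsto_norm_cocompact_atTop
  simpa [zero_pow hn] using (h.inv_tendsto_atTop).pow n

lemma hasDerivAt_residueIntegrand (s : ℝ) (n : ℕ) (b : ℝ) :
    HasDerivAt (residueIntegrand s n)
      (I * s * residueIntegrand s n b - I * n * residueIntegrand s (n + 1) b) b := by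
  have hlin : HasDerivAt (fun b : ℝ => (1 + b * I : ℂ)) I b := by
    simpa using ((hasDerivAt_id (b : ℂ)).mul_const I).const_add 1 |>.comp_ofReal
  have hpow := (hlin.fun_pow n).fun_inv (pow_ne_zero n (one_add_ofReal_mul_I_ne_zero b))
  have hexp : HasDerivAt (fun b : ℝ => cexp (I * s * b)) (I * s * cexp (I * s * b)) b := by
    simpa [mul_comm] using ((hasDerivAt_id (b : ℂ)).const_mul (I * s)).cexp.comp_ofReal
  refine (hpow.fun_mul hexp).congr_deriv ?_
  have h1 := one_add_ofReal_mul_I_ne_zero b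
  simp only [residueIntegrand]
  rcases n with _ | n
  · simp
  · rw [Nat.add_sub_cancel]
    field_simp
    ring

lemma intervalIntegral_residueIntegrand_eq {s : ℝ} (hs : s ≠ 0) (n : ℕ) (R : ℝ) :
    ∫ b in -R..R, residueIntegrand s n b
      = (I * s)⁻¹ * (residueIntegrand s n R - residueIntegrand s n (-R))
        + n / s * ∫ b in -R..R, residueIntegrand s (n + 1) b := by
  have hcont := continuous_residueIntegrand s
  have hftc := intervalIntegral.integral_eq_sub_of_hasDerivAt (a := -R) (b := R)
    (fun b _ => hasDerivAt_residueIntegrand s n b)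
    (((continuous_const.fun_mul (hcont n)).sub
      (continuous_const.fun_mul (hcont (n + 1)))).intervalIntegrable _ _)
  rw [intervalIntegral.integral_sub ((continuous_const.fun_mul (hcont n)).intervalIntegrable _ _)
      ((continuous_const.fun_mul (hcont (n + 1))).intervalIntegrable _ _),
    intervalIntegral.integral_const_mul, intervalIntegral.integral_const_mul] at hftc
  have hs' : (s : ℂ) ≠ 0 := ofReal_ne_zero.mpr hs
  field_simp
  linear_combination hftc

lemma integrable_residueIntegrand (s : ℝ) {n : ℕ} (hn : 2 ≤ n) :
    Integrable (residueIntegrand s n) := by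
  refine (integrable_inv_one_add_ofReal_mul_I_pow hn).norm.mono'
    (continuous_residueIntegrand s n).aestronglyMeasurable (ae_of_all _ fun b => ?_)
  rw [norm_residueIntegrand, norm_inv, norm_pow, inv_pow]

lemma tendsto_intervalIntegral_residueIntegrand {s : ℝ} (hs : 0 < s) (k : ℕ) :
    Tendsto (fun R : ℝ => ∫ b in -R..R, residueIntegrand s (k + 1) b) atTop
      (nhds (2 * Real.pi * (s ^ k * cexp (-s) / k.factorial))) := by
  have hlarge : ∀ m, 1 ≤ m →
      Tendsto (fun R : ℝ => ∫ b in -R..R, residueIntegrand s (m + 1) b) atTop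
        (nhds (2 * Real.pi * (s ^ m * cexp (-s) / m.factorial))) := fun m hm => by
    rw [← integral_residueIntegrand hs hm]
    exact intervalIntegral_tendsto_integral (integrable_residueIntegrand s (by omega))
      tendsto_neg_atTop_atBot tendsto_id
  rcases k with _ | k
  · have hdecay := tendsto_residueIntegrand_cocompact s one_ne_zero
    have hboundary : Tendsto (fun R : ℝ => residueIntegrand s 1 R - residueIntegrand s 1 (-R))
        atTop (nhds 0) := by
      simpa using (hdecay.mono_left atTop_le_cocompact).sub
        (hdecay.comp (tendsto_neg_atTop_atBot.mono_right atBot_le_cocompact))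
    have hlim :=
      (hboundary.const_mul (I * s)⁻¹).add ((hlarge 1 le_rfl).const_mul (1 / (s : ℂ)))
    have hs' : (s : ℂ) ≠ 0 := ofReal_ne_zero.mpr hs.ne'
    convert hlim using 2 with R
    · simpa using intervalIntegral_residueIntegrand_eq hs.ne' 1 R
    · field_simp
      simp
  · exact hlarge (k + 1) (by omega)

/-- Residue computation for the ladder resummation: for `s > 0` and `k ≥ 0`,
`(1/2π) ∫_ℝ (-i/(b-i))^{k+1} e^{isb} db = e^{-s} s^k / k!`
(the integral interpreted as a symmetric improper integral). -/
theorem residue_poisson_weight (s : ℝ) (hs : 0 < s) (k : ℕ) :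
    Tendsto (fun R : ℝ =>
        (1 / (2 * (Real.pi : ℂ))) *
          ∫ b in (-R)..R,
            ((-Complex.I) / ((b : ℂ) - Complex.I)) ^ (k + 1) *
              Complex.exp (Complex.I * (s : ℂ) * (b : ℂ)))
      atTop
      (nhds ((Real.exp (-s) * s ^ k / (Nat.factorial k) : ℝ) : ℂ)) := by
  have hintegrand : ∀ b : ℝ, ((-Complex.I) / ((b : ℂ) - Complex.I)) ^ (k + 1) *
      Complex.exp (Complex.I * (s : ℂ) * (b : ℂ)) = residueIntegrand s (k + 1) b := fun b => by
    rw [residueIntegrand, neg_I_div_ofReal_sub_I, inv_pow]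
  have hπ : (Real.pi : ℂ) ≠ 0 := ofReal_ne_zero.mpr Real.pi_ne_zero
  simp_rw [hintegrand]
  convert (tendsto_intervalIntegral_residueIntegrand hs k).const_mul (1 / (2 * (Real.pi : ℂ)))
    using 2
  push_cast
  field_simp
end
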